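/- arXiv:0707.1120 — 2 statements merged into one kernel-verified Lean document; each statement's English description precedes it below -/
import Mathlib

section
/- Let M be a q×p integer matrix, Γ the graph on ℕ^q with edges given by ± columns of M, and define a relation on bounded M-subgraphs by Γ(u) ≤ Γ(u') iff there exist v ∈ Γ(u), v' ∈ Γ(u') with v ≤ v' coordinatewise. Then this relation is reflexive and has the property: if Γ(u) ≤ Γ(u'), then for every v ∈ Γ(u) there exists v' ∈ Γ(u') with v ≤ v' coordinatewise. -/
/-- Two vertices `u, u' ∈ ℕ^q` are adjacent in the graph `Γ` iff `u - u'` or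
`u' - u` is a column of `M`. -/
def MAdj (q p : ℕ) (M : Matrix (Fin q) (Fin p) ℤ) (u u' : Fin q → ℕ) : Prop :=
  ∃ j : Fin p,
    ((fun i => (u i : ℤ) - (u' i : ℤ)) = fun i => M i j) ∨
    ((fun i => (u' i : ℤ) - (u i : ℤ)) = fun i => M i j)

/-- The `M`-subgraph (connected component of `Γ`) containing `u`. -/
def MComp (q p : ℕ) (M : Matrix (Fin q) (Fin p) ℤ) (u : Fin q → ℕ) :
    Set (Fin q → ℕ) :=
  {w | Relation.ReflTransGen (MAdj q p M) u w}

/-!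
Adjacency in `Γ` only sees differences of vertices, so translating a path by a vector of `ℕ^q`
gives a path again. If `v₀ ∈ Γ(u)` lies below `v₀' ∈ Γ(u')`, translating a path from `v₀` to
any `v ∈ Γ(u)` by `v₀' - v₀` yields a path from `v₀'` to a vertex of `Γ(u')` above `v`.
-/

section

variable {q p : ℕ} {M : Matrix (Fin q) (Fin p) ℤ}

theorem MAdj.symm {a b : Fin q → ℕ} (h : MAdj q p M a b) : MAdj q p M b a := by
  obtain ⟨j, hj | hj⟩ := h
  exacts [⟨j, Or.inr hj⟩, ⟨j, Or.inl hj⟩]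

instance : Std.Symm (MAdj q p M) := ⟨fun _ _ => MAdj.symm⟩

theorem MAdj.add_right {a b : Fin q → ℕ} (h : MAdj q p M a b) (d : Fin q → ℕ) :
    MAdj q p M (a + d) (b + d) := by
  have hdiff : ∀ x y : Fin q → ℕ,
      (fun i => ((x + d) i : ℤ) - ((y + d) i : ℤ)) = fun i => (x i : ℤ) - (y i : ℤ) := by
    intro x y
    funext i
    push_cast [Pi.add_apply]
    ring
  simpa only [MAdj, hdiff] using h

theorem reflTransGen_mAdj_add_right {a b : Fin q → ℕ}
    (h : Relation.ReflTransGen (MAdj q p M) a b) (d : Fin q → ℕ) :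
    Relation.ReflTransGen (MAdj q p M) (a + d) (b + d) :=
  h.lift (· + d) fun _ _ hab => hab.add_right d

theorem exists_mem_mComp_le_of_le {u u' v₀ v₀' v : Fin q → ℕ}
    (hv₀ : v₀ ∈ MComp q p M u) (hv₀' : v₀' ∈ MComp q p M u') (hle : v₀ ≤ v₀')
    (hv : v ∈ MComp q p M u) :
    ∃ v' ∈ MComp q p M u', v ≤ v' := by
  have hpath : Relation.ReflTransGen (MAdj q p M) v₀ v :=
    (symm_of _ hv₀).trans hv
  have hshift : v₀ + (v₀' - v₀) = v₀' := add_tsub_cancel_of_le hle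
  have hpath' := reflTransGen_mAdj_add_right hpath (v₀' - v₀)
  rw [hshift] at hpath'
  exact ⟨v + (v₀' - v₀), hv₀'.trans hpath', le_self_add⟩

end

theorem msubgraph_order_general (q p : ℕ) (M : Matrix (Fin q) (Fin p) ℤ)
    (u u' : Fin q → ℕ) :
    (∃ v ∈ MComp q p M u, ∃ v' ∈ MComp q p M u, v ≤ v') ∧
    ((∃ v ∈ MComp q p M u, ∃ v' ∈ MComp q p M u', v ≤ v') →
      ∀ v ∈ MComp q p M u, ∃ v' ∈ MComp q p M u', v ≤ v') :=
  ⟨⟨u, .refl, u, .refl, le_rfl⟩,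
    fun ⟨_, hv₀, _, hv₀', hle⟩ _ hv => exists_mem_mComp_le_of_le hv₀ hv₀' hle hv⟩

/-- On bounded `M`-subgraphs, the relation `Γ(u) ≤ Γ(u')` ⟺ some `v ∈ Γ(u)` is
coordinatewise below some `v' ∈ Γ(u')` is reflexive, and has the property that
if `Γ(u) ≤ Γ(u')` then **every** `v ∈ Γ(u)` is below some `v' ∈ Γ(u')`. -/
theorem msubgraph_order (q p : ℕ) (M : Matrix (Fin q) (Fin p) ℤ)
    (u u' : Fin q → ℕ)
    (hb : (MComp q p M u).Finite) (hb' : (MComp q p M u').Finite) :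
    (∃ v ∈ MComp q p M u, ∃ v' ∈ MComp q p M u, v ≤ v') ∧
    ((∃ v ∈ MComp q p M u, ∃ v' ∈ MComp q p M u', v ≤ v') →
      ∀ v ∈ MComp q p M u, ∃ v' ∈ MComp q p M u', v ≤ v') :=
  msubgraph_order_general q p M u u'
end

section
/- Let a, a' ∈ ℂ with a, a' ∉ ℤ and 2a' + a − 3 ∉ 3ℤ or 2a + a' − 3 ∉ 3ℤ. Then the Puiseux monomial m(x) = x₁^{(2a'+a−3)/3} x₄^{(2a+a'−3)/3} satisfies the Euler equations [3θ₁+2θ₂+θ₃ − (2a'+a−3)] m = 0 and [θ₂+2θ₃+3θ₄ − (2a+a'−3)] m = 0 and is annihilated by ∂₁∂₃ − ∂₂² and ∂₂∂₄ − ∂₃², but is NOT annihilated by ∂₁∂₄ − ∂₂∂₃. -/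
/-- The space of formal Puiseux/Laurent series in `x₁,…,x₄` with complex
exponents, encoded as finitely supported coefficient functions on exponent
vectors. -/
abbrev PuiseuxSpan : Type := (Fin 4 → ℂ) →₀ ℂ

/-- The operator `∂_i`: it sends `x^e` to `e_i · x^{e - e_i}`. -/
noncomputable def Pd (i : Fin 4) : Module.End ℂ PuiseuxSpan :=
  Finsupp.lsum ℂ fun e => (e i) • Finsupp.lsingle (e - Pi.single i 1)

/-- The operator `θ_i = x_i ∂_i`: it sends `x^e` to `e_i · x^e`. -/
noncomputable def Pθ (i : Fin 4) : Module.End ℂ PuiseuxSpan :=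
  Finsupp.lsum ℂ fun e => (e i) • Finsupp.lsingle e

lemma Pd_single (i : Fin 4) (e : Fin 4 → ℂ) (r : ℂ) :
    Pd i (Finsupp.single e r) = Finsupp.single (e - Pi.single i 1) (e i * r) := by
  simp [Pd, Finsupp.smul_single, mul_comm]

lemma Pθ_single (i : Fin 4) (e : Fin 4 → ℂ) (r : ℂ) :
    Pθ i (Finsupp.single e r) = Finsupp.single e (e i * r) := by
  simp [Pθ, Finsupp.smul_single, mul_comm]

/-- Let `a, a' ∈ ℂ \ ℤ` with `2a'+a-3 ∉ 3ℤ` and `2a+a'-3 ∉ 3ℤ`.  The Puiseux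
monomial `m = x₁^{(2a'+a-3)/3} x₄^{(2a+a'-3)/3}` satisfies the two Euler
equations and is annihilated by `∂₁∂₃ - ∂₂²` and `∂₂∂₄ - ∂₃²`, but is NOT
annihilated by `∂₁∂₄ - ∂₂∂₃`. -/
theorem puiseux_monomial_solution (a a' : ℂ)
    (ha : ∀ k : ℤ, a ≠ (k : ℂ)) (ha' : ∀ k : ℤ, a' ≠ (k : ℂ))
    (h1 : ∀ k : ℤ, 2 * a' + a - 3 ≠ 3 * (k : ℂ))
    (h2 : ∀ k : ℤ, 2 * a + a' - 3 ≠ 3 * (k : ℂ)) :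
    let c : Fin 4 → ℂ := ![(2 * a' + a - 3) / 3, 0, 0, (2 * a + a' - 3) / 3]
    let m : PuiseuxSpan := Finsupp.single c 1
    (((3 • Pθ 0 + 2 • Pθ 1 + Pθ 2 - (2 * a' + a - 3) • 1 : Module.End ℂ PuiseuxSpan)) m = 0) ∧
    (((Pθ 1 + 2 • Pθ 2 + 3 • Pθ 3 - (2 * a + a' - 3) • 1 : Module.End ℂ PuiseuxSpan)) m = 0) ∧
    ((Pd 0 * Pd 2 - Pd 1 * Pd 1) m = 0) ∧
    ((Pd 1 * Pd 3 - Pd 2 * Pd 2) m = 0) ∧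
    ((Pd 0 * Pd 3 - Pd 1 * Pd 2) m ≠ 0) := by
  intro c m
  have hc0 : c 0 = (2 * a' + a - 3) / 3 := rfl
  have hc1 : c 1 = 0 := rfl
  have hc2 : c 2 = 0 := rfl
  have hc3 : c 3 = (2 * a + a' - 3) / 3 := rfl
  have hA : (2 * a' + a - 3) ≠ 0 := by simpa using h1 0
  have hB : (2 * a + a' - 3) ≠ 0 := by simpa using h2 0
  refine ⟨?_, ?_, ?_, ?_, ?_⟩
  · simp only [LinearMap.sub_apply, LinearMap.add_apply, LinearMap.smul_apply,
      Module.End.one_apply, Pθ_single, m, hc0, hc1, hc2, Finsupp.smul_single]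
    ext d
    by_cases h : c = d <;> simp [Finsupp.single_apply, h] <;> ring
  · simp only [LinearMap.sub_apply, LinearMap.add_apply, LinearMap.smul_apply,
      Module.End.one_apply, Pθ_single, m, hc1, hc2, hc3, Finsupp.smul_single]
    ext d
    by_cases h : c = d <;> simp [Finsupp.single_apply, h] <;> ring
  · simp [Module.End.mul_apply, Pd_single, m, hc1, hc2]
  · simp [Module.End.mul_apply, Pd_single, m, hc1, hc2]
  · simp only [LinearMap.sub_apply, Module.End.mul_apply, Pd_single, m, hc1, hc2]
    simp only [Pi.sub_apply, zero_mul, mul_zero, Finsupp.single_zero, sub_zero,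
      Pi.single_eq_same, Pi.single_eq_of_ne (by decide : (0:Fin 4) ≠ 3), sub_zero, mul_one]
    rw [Ne, Finsupp.single_eq_zero, hc0, hc3]
    exact mul_ne_zero (div_ne_zero hA (by norm_num)) (div_ne_zero hB (by norm_num))
end
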